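/- arXiv:1910.09208 — 6 statements merged into one kernel-verified Lean document; each statement's English description precedes it below -/
import Mathlib

section
/- Let H be a nonempty r-uniform hypergraph with vertex set V. If D ⊆ V satisfies e(H − D) ≤ (1−ε)·e(H) for some ε > 0 (i.e., at least an ε-fraction of edges of H meet D), then |D| ≥ (ε/r)²·‖σ_H‖^{−2}, where σ_H is the (1-)degree measure of H. -/
/-- Degree of a vertex set `T` in a hypergraph with multiplicities. -/
def hdeg {V : Type*} [DecidableEq V] (H : Multiset (Finset V)) (T : Finset V) : ℕ :=
  (H.filter fun A => T ⊆ A).card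

lemma aux_count {V : Type*} [DecidableEq V] (D : Finset V) (H : Multiset (Finset V)) :
    Multiset.card (H.filter fun A => ¬ A ∩ D = ∅)
      ≤ ∑ v ∈ D, Multiset.card (H.filter fun A => v ∈ A) := by
  induction H using Multiset.induction_on with
  | empty => simp
  | cons a s ih =>
    rw [Multiset.filter_cons]
    rw [Multiset.card_add]
    have h2 : ∑ v ∈ D, Multiset.card (Multiset.filter (fun A => v ∈ A) (a ::ₘ s))
        = (∑ v ∈ D, Multiset.card (if v ∈ a then ({a} : Multiset (Finset V)) else 0))
          + ∑ v ∈ D, Multiset.card (Multiset.filter (fun A => v ∈ A) s) := by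
      rw [← Finset.sum_add_distrib]
      refine Finset.sum_congr rfl fun v _ => ?_
      rw [Multiset.filter_cons, Multiset.card_add]
    rw [h2]
    refine Nat.add_le_add ?_ ih
    by_cases h : a ∩ D = ∅
    · rw [if_neg (not_not_intro h)]
      exact Nat.zero_le _
    · rw [if_pos h, Multiset.card_singleton]
      have hne : (a ∩ D).Nonempty := Finset.nonempty_iff_ne_empty.2 h
      obtain ⟨v, hv⟩ := hne
      rw [Finset.mem_inter] at hv
      calc 1 ≤ Multiset.card (if v ∈ a then ({a} : Multiset (Finset V)) else 0) := by
              simp [hv.1]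
        _ ≤ _ := Finset.single_le_sum (f := fun v =>
              Multiset.card (if v ∈ a then ({a} : Multiset (Finset V)) else 0))
              (fun _ _ => Nat.zero_le _) hv.2

theorem stmt_2 {V : Type*} [Fintype V] [DecidableEq V] (r : ℕ)
    (H : Multiset (Finset V)) (hne : H ≠ 0) (hunif : ∀ A ∈ H, A.card = r)
    (D : Finset V) (ε : ℝ) (hε : 0 < ε)
    (hcut : ((H.filter fun A => A ∩ D = ∅).card : ℝ)
      ≤ (1 - ε) * (Multiset.card H : ℝ)) :
    (ε / r) ^ 2 *
        (∑ v : V, ((hdeg H {v} : ℝ) / ((r : ℝ) * (Multiset.card H : ℝ))) ^ 2)⁻¹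
      ≤ (D.card : ℝ) := by
  rcases Nat.eq_zero_or_pos r with hr | hr
  · simp [hr]
  set e : ℝ := (Multiset.card H : ℝ) with he
  have he0 : 0 < e := by
    have : 0 < Multiset.card H := Multiset.card_pos.2 hne
    rw [he]; exact_mod_cast this
  have hr0 : (0:ℝ) < r := by exact_mod_cast hr
  set d : V → ℝ := fun v => (hdeg H {v} : ℝ) with hd
  have hd0 : ∀ v, 0 ≤ d v := fun v => Nat.cast_nonneg _
  -- split edges
  have hsplit : ((H.filter fun A => A ∩ D = ∅).card : ℝ)
      + ((H.filter fun A => ¬ A ∩ D = ∅).card : ℝ) = e := by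
    rw [he]
    norm_cast
    rw [← Multiset.card_add, Multiset.filter_add_not]
  have hmeet : ε * e ≤ ((H.filter fun A => ¬ A ∩ D = ∅).card : ℝ) := by
    nlinarith [hsplit, hcut]
  -- degree sum bound
  have hdegsum : ((H.filter fun A => ¬ A ∩ D = ∅).card : ℝ) ≤ ∑ v ∈ D, d v := by
    have := aux_count D H
    have h2 : ∀ v, d v = (Multiset.card (H.filter fun A => v ∈ A) : ℝ) := by
      intro v
      simp [hd, hdeg, Finset.singleton_subset_iff]
    calc ((H.filter fun A => ¬ A ∩ D = ∅).card : ℝ)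
        ≤ ((∑ v ∈ D, Multiset.card (H.filter fun A => v ∈ A) : ℕ) : ℝ) := by
          exact_mod_cast this
      _ = ∑ v ∈ D, d v := by rw [Nat.cast_sum]; exact Finset.sum_congr rfl fun v _ => (h2 v).symm
  have hεe : ε * e ≤ ∑ v ∈ D, d v := le_trans hmeet hdegsum
  -- Cauchy-Schwarz
  have hcs : (∑ v ∈ D, d v) ^ 2 ≤ (D.card : ℝ) * ∑ v ∈ D, d v ^ 2 :=
    sq_sum_le_card_mul_sum_sq
  have hsub : ∑ v ∈ D, d v ^ 2 ≤ ∑ v : V, d v ^ 2 :=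
    Finset.sum_le_sum_of_subset_of_nonneg (Finset.subset_univ D)
      (fun v _ _ => sq_nonneg _)
  set S : ℝ := ∑ v : V, d v ^ 2 with hS
  have hkey : (ε * e) ^ 2 ≤ (D.card : ℝ) * S := by
    nlinarith [hεe, hcs, hsub, Finset.sum_nonneg (fun v (_ : v ∈ D) => hd0 v),
      mul_pos hε he0]
  have hS0 : 0 < S := by
    by_contra h
    push_neg at h
    have : (D.card : ℝ) * S ≤ 0 :=
      mul_nonpos_of_nonneg_of_nonpos (Nat.cast_nonneg _) h
    nlinarith [mul_pos hε he0]
  -- rewrite goal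
  have hgoal : (∑ v : V, (d v / (r * e)) ^ 2) = S / (r * e) ^ 2 := by
    rw [hS, Finset.sum_div]
    exact Finset.sum_congr rfl fun v _ => by rw [div_pow]
  show (ε / r) ^ 2 * (∑ v : V, (d v / (r * e)) ^ 2)⁻¹ ≤ (D.card : ℝ)
  rw [hgoal]
  have hre : (0:ℝ) < (r * e) ^ 2 := by positivity
  rw [inv_div, div_pow]
  rw [div_mul_div_comm, div_le_iff₀ (mul_pos (by positivity) hS0)]
  calc ε ^ 2 * (r * e) ^ 2 = (ε * e) ^ 2 * r ^ 2 := by ring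
    _ ≤ ((D.card : ℝ) * S) * r ^ 2 := by nlinarith [sq_nonneg (r:ℝ)]
    _ = (D.card : ℝ) * (r ^ 2 * S) := by ring
end

section
/- Let ν_1,...,ν_k ∈ ℝ^d and λ ∈ ℝ^k have nonnegative coordinates with λ_1 + ... + λ_k = 1, and set ν = Σ_i λ_i ν_i. Then for every x > 0, every μ ∈ ℝ^d with nonnegative coordinates, and all x_1,...,x_k ∈ (0,x], there exists i ∈ {1,...,k} with λ_i > 0 such that the vector μ_i = (1 − x_iλ_i)·μ + x_iλ_i·ν_i satisfies ‖μ_i‖² ≤ ‖μ‖² + λ_i x_i·((2‖ν‖/‖μ‖ − 2 + x‖λ‖²)·‖μ‖² + x·Σ_i λ_i²‖ν_i‖²). -/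
/-!
Write `μᵢ = μ + tᵢ (νᵢ - μ)` with `tᵢ = xᵢ λᵢ`, so that `‖μᵢ‖² = ‖μ‖² + tᵢ (gᵢ - 2‖μ‖²)` where
`gᵢ = 2⟪μ, νᵢ⟫ + tᵢ ‖νᵢ - μ‖²`. Some `i` with `λᵢ > 0` has `gᵢ` at most the `λ`-average
`∑ⱼ λⱼ gⱼ`, and this average is at most `2‖μ‖‖ν‖ + x ∑ⱼ λⱼ² (‖μ‖² + ‖νⱼ‖²)` by Cauchy–Schwarz,
since `⟪μ, νⱼ⟫ ≥ 0` for vectors with nonnegative coordinates.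
-/

open Finset RealInnerProductSpace

theorem Fintype.exists_pos_le_weighted_sum {ι : Type*} [Fintype ι] (w g : ι → ℝ)
    (hw : ∀ i, 0 ≤ w i) (hsum : ∑ i, w i = 1) :
    ∃ i, 0 < w i ∧ g i ≤ ∑ j, w j * g j := by
  set S := ∑ j, w j * g j
  by_contra! h
  have hzero : ∑ i, w i * (g i - S) = 0 := by
    simp only [mul_sub, sum_sub_distrib, ← sum_mul, hsum, one_mul, S, sub_self]
  obtain ⟨i, -, hi⟩ := exists_ne_zero_of_sum_ne_zero (hsum ▸ one_ne_zero : ∑ i, w i ≠ 0)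
  have hi : 0 < w i := (hw i).lt_of_ne' hi
  refine hzero.not_gt (sum_pos' (fun j _ => ?_) ⟨i, mem_univ _, ?_⟩)
  · rcases (hw j).eq_or_lt with hj | hj
    · simp [← hj]
    · exact mul_nonneg hj.le (sub_nonneg.2 (h j hj).le)
  · exact mul_pos hi (sub_pos.2 (h i hi))

theorem EuclideanSpace.inner_nonneg {ι : Type*} [Fintype ι] {u v : EuclideanSpace ℝ ι}
    (hu : ∀ j, 0 ≤ u j) (hv : ∀ j, 0 ≤ v j) : 0 ≤ ⟪u, v⟫ := by
  rw [PiLp.inner_apply]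
  exact sum_nonneg fun j _ => by simpa using mul_nonneg (hv j) (hu j)

section

variable {E : Type*} [NormedAddCommGroup E] [InnerProductSpace ℝ E]

theorem norm_one_sub_smul_add_smul_sq (t : ℝ) (u v : E) :
    ‖(1 - t) • u + t • v‖ ^ 2 = ‖u‖ ^ 2 + t * (2 * ⟪u, v⟫ + t * ‖v - u‖ ^ 2 - 2 * ‖u‖ ^ 2) := by
  have : (1 - t) • u + t • v = u + t • (v - u) := by
    rw [smul_sub, sub_smul, one_smul]; abel
  rw [this, norm_add_sq_real, real_inner_smul_right, inner_sub_right, norm_smul,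
    real_inner_self_eq_norm_sq, mul_pow, Real.norm_eq_abs, sq_abs]
  ring

theorem norm_sub_sq_le_of_inner_nonneg {u v : E} (h : 0 ≤ ⟪u, v⟫) :
    ‖u - v‖ ^ 2 ≤ ‖u‖ ^ 2 + ‖v‖ ^ 2 := by
  rw [norm_sub_sq_real]; linarith

theorem sum_mul_two_inner_add_norm_sub_sq_le {ι : Type*} [Fintype ι] (lam xi : ι → ℝ) (ν : ι → E) (μ : E)
    (x : ℝ) (hinner : ∀ j, 0 ≤ ⟪μ, ν j⟫) (hxi : ∀ j, 0 ≤ xi j ∧ xi j ≤ x) :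
    ∑ j, lam j * (2 * ⟪μ, ν j⟫ + lam j * xi j * ‖ν j - μ‖ ^ 2) ≤
      2 * ‖μ‖ * ‖∑ j, lam j • ν j‖ +
        x * ((∑ j, lam j ^ 2) * ‖μ‖ ^ 2 + ∑ j, lam j ^ 2 * ‖ν j‖ ^ 2) := by
  have hsplit : ∑ j, lam j * (2 * ⟪μ, ν j⟫ + lam j * xi j * ‖ν j - μ‖ ^ 2) =
      2 * ⟪μ, ∑ j, lam j • ν j⟫ + ∑ j, lam j ^ 2 * (xi j * ‖ν j - μ‖ ^ 2) := by
    simp only [inner_sum, real_inner_smul_right, mul_sum, ← sum_add_distrib]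
    exact sum_congr rfl fun j _ => by ring
  have hdist : ∀ j, xi j * ‖ν j - μ‖ ^ 2 ≤ x * (‖μ‖ ^ 2 + ‖ν j‖ ^ 2) := fun j => by
    rw [norm_sub_rev]
    exact mul_le_mul (hxi j).2 (norm_sub_sq_le_of_inner_nonneg (hinner j)) (sq_nonneg _)
      ((hxi j).1.trans (hxi j).2)
  calc _ = 2 * ⟪μ, ∑ j, lam j • ν j⟫ + ∑ j, lam j ^ 2 * (xi j * ‖ν j - μ‖ ^ 2) := hsplit
    _ ≤ 2 * (‖μ‖ * ‖∑ j, lam j • ν j‖) + ∑ j, lam j ^ 2 * (x * (‖μ‖ ^ 2 + ‖ν j‖ ^ 2)) := by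
        gcongr 2 * ?_ + ∑ j, _ * ?_ with j
        · exact real_inner_le_norm _ _
        · exact hdist j
    _ = _ := by
        simp only [mul_add, sum_add_distrib, ← sum_mul, mul_sum]
        ring_nf

end

theorem stmt_7_general (d k : ℕ) (ν : Fin k → EuclideanSpace ℝ (Fin d))
    (lam : Fin k → ℝ) (hν : ∀ i j, 0 ≤ ν i j) (hlam : ∀ i, 0 ≤ lam i)
    (hsum : ∑ i, lam i = 1)
    (μ : EuclideanSpace ℝ (Fin d)) (hμ : ∀ j, 0 ≤ μ j)
    (x : ℝ) (xi : Fin k → ℝ) (hxi : ∀ i, 0 < xi i ∧ xi i ≤ x) :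
    ∃ i : Fin k, 0 < lam i ∧
      ‖(1 - xi i * lam i) • μ + (xi i * lam i) • ν i‖ ^ 2
        ≤ ‖μ‖ ^ 2 + lam i * xi i *
            ((2 * ‖∑ j, lam j • ν j‖ / ‖μ‖ - 2 + x * ∑ j, (lam j) ^ 2) * ‖μ‖ ^ 2
              + x * ∑ j, (lam j) ^ 2 * ‖ν j‖ ^ 2) := by
  obtain ⟨i, hi, hgi⟩ := Fintype.exists_pos_le_weighted_sum lam
    (fun j => 2 * ⟪μ, ν j⟫ + lam j * xi j * ‖ν j - μ‖ ^ 2) hlam hsum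
  have hbound := hgi.trans <| sum_mul_two_inner_add_norm_sub_sq_le lam xi ν μ x
    (fun j => EuclideanSpace.inner_nonneg hμ (hν j)) (fun j => ⟨(hxi j).1.le, (hxi j).2⟩)
  have hdiv : 2 * ‖∑ j, lam j • ν j‖ / ‖μ‖ * ‖μ‖ ^ 2 = 2 * ‖μ‖ * ‖∑ j, lam j • ν j‖ := by
    rcases eq_or_ne ‖μ‖ 0 with h | h
    · simp [h]
    · field_simp
  refine ⟨i, hi, ?_⟩
  rw [norm_one_sub_smul_add_smul_sq, mul_comm (xi i)]
  have ht : 0 ≤ lam i * xi i := mul_nonneg hi.le (hxi i).1.le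
  gcongr ‖μ‖ ^ 2 + _ * ?_
  rw [add_mul, sub_mul, hdiv]
  linarith

theorem stmt_7 (d k : ℕ) (ν : Fin k → EuclideanSpace ℝ (Fin d))
    (lam : Fin k → ℝ) (hν : ∀ i j, 0 ≤ ν i j) (hlam : ∀ i, 0 ≤ lam i)
    (hsum : ∑ i, lam i = 1)
    (μ : EuclideanSpace ℝ (Fin d)) (hμ : ∀ j, 0 ≤ μ j) (hμ0 : μ ≠ 0)
    (x : ℝ) (hx : 0 < x) (xi : Fin k → ℝ) (hxi : ∀ i, 0 < xi i ∧ xi i ≤ x) :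
    ∃ i : Fin k, 0 < lam i ∧
      ‖(1 - xi i * lam i) • μ + (xi i * lam i) • ν i‖ ^ 2
        ≤ ‖μ‖ ^ 2 + lam i * xi i *
            ((2 * ‖∑ j, lam j • ν j‖ / ‖μ‖ - 2 + x * ∑ j, (lam j) ^ 2) * ‖μ‖ ^ 2
              + x * ∑ j, (lam j) ^ 2 * ‖ν j‖ ^ 2) :=
  stmt_7_general d k ν lam hν hlam hsum μ hμ x xi hxi
end

section
/- Let r ≥ 2 and let Π be an r-partition of {1,...,n} that is unbalanced, i.e., some part has fewer than n/(2r) elements. Then the complete multipartite graph K_Π with colour classes the parts of Π satisfies e(K_Π) ≤ ex(n, K_{r+1}) − n²/(16r²) + n. -/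
/-!
Writing `a_i` for the part sizes, `2 e(K_Π) = n² - ∑ a_i²`. The Turán graph is the complete
`r`-partite graph on the residue classes mod `r`, whose parts have at most `⌊n/r⌋ + 1` vertices,
so `2 ex(n, K_{r+1}) ≥ n² - n²/r - n`. On the other hand `∑ a_i² - n²/r` is `∑ (a_i - n/r)²`,
and a part with fewer than `n/(2r)` vertices alone contributes at least `(n/(2r))²` to it.
-/

open Finset SimpleGraph

/-- The complete multipartite graph determined by an `r`-partition of the
vertex set, given as a colouring function. -/
def partGraph {n r : ℕ} (p : Fin n → Fin r) : SimpleGraph (Fin n) where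
  Adj u v := p u ≠ p v
  symm := ⟨fun _ _ h e => h e.symm⟩
  loopless := ⟨fun _ h => h rfl⟩

section SumSq

variable {ι : Type*} [Fintype ι]

lemma sq_sum_div_card_add_sq_sub_le_sum_sq (f : ι → ℝ) (i : ι) :
    (∑ j, f j) ^ 2 / Fintype.card ι + (f i - (∑ j, f j) / Fintype.card ι) ^ 2
      ≤ ∑ j, f j ^ 2 := by
  set m := (∑ j, f j) / Fintype.card ι
  have hcard : (Fintype.card ι : ℝ) ≠ 0 := by
    have : Nonempty ι := ⟨i⟩
    positivity
  have hvariance : ∑ j, (f j - m) ^ 2 = ∑ j, f j ^ 2 - (∑ j, f j) ^ 2 / Fintype.card ι := by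
    simp only [sub_sq, sum_add_distrib, sum_sub_distrib, ← sum_mul, ← mul_sum, sum_const,
      card_univ, nsmul_eq_mul, m]
    field_simp
    ring
  have := single_le_sum (f := fun j => (f j - m) ^ 2) (fun j _ => sq_nonneg _) (mem_univ i)
  linarith

lemma sq_sum_div_card_add_sq_le_sum_sq_of_le {f : ι → ℝ} {i : ι} (hsum : 0 ≤ ∑ j, f j)
    (hi : f i ≤ (∑ j, f j) / (2 * Fintype.card ι)) :
    (∑ j, f j) ^ 2 / Fintype.card ι + ((∑ j, f j) / (2 * Fintype.card ι)) ^ 2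
      ≤ ∑ j, f j ^ 2 := by
  have hcard : (0 : ℝ) < Fintype.card ι := by
    have : Nonempty ι := ⟨i⟩
    positivity
  have hhalf : (∑ j, f j) / Fintype.card ι = 2 * ((∑ j, f j) / (2 * Fintype.card ι)) := by
    field_simp
  calc (∑ j, f j) ^ 2 / Fintype.card ι + ((∑ j, f j) / (2 * Fintype.card ι)) ^ 2
      ≤ (∑ j, f j) ^ 2 / Fintype.card ι + ((∑ j, f j) / Fintype.card ι - f i) ^ 2 := by
        have : 0 ≤ (∑ j, f j) / (2 * Fintype.card ι) := by positivity
        gcongr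
        linarith
    _ = (∑ j, f j) ^ 2 / Fintype.card ι + (f i - (∑ j, f j) / Fintype.card ι) ^ 2 := by ring
    _ ≤ ∑ j, f j ^ 2 := sq_sum_div_card_add_sq_sub_le_sum_sq f i

end SumSq

section Fibers

variable {α β : Type*} [Fintype α] [Fintype β] [DecidableEq β] (p : α → β)

lemma sum_card_fiber : ∑ i, #{v | p v = i} = Fintype.card α := by
  rw [← card_eq_sum_card_fiberwise fun v _ => mem_univ (p v), card_univ]

lemma sum_card_fiber_apply_eq_sum_sq : ∑ v, #{u | p u = p v} = ∑ i, #{v | p v = i} ^ 2 := by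
  rw [← sum_fiberwise univ p]
  refine sum_congr rfl fun i _ => ?_
  rw [sum_congr rfl fun v hv => by rw [(mem_filter.1 hv).2], sum_const, smul_eq_mul, sq]

end Fibers

section PartGraph

variable {n r : ℕ}

instance (p : Fin n → Fin r) : DecidableRel (partGraph p).Adj :=
  fun u v => inferInstanceAs (Decidable (p u ≠ p v))

lemma degree_partGraph_add_card_fiber (p : Fin n → Fin r) (v : Fin n) :
    (partGraph p).degree v + #{u | p u = p v} = n := by
  have h : (partGraph p).neighborFinset v = ({u | ¬ p u = p v} : Finset (Fin n)) := by
    ext u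
    simp only [mem_neighborFinset, mem_filter, mem_univ, true_and]
    exact ne_comm
  rw [← card_neighborFinset_eq_degree, h, add_comm, card_filter_add_card_filter_not, card_univ,
    Fintype.card_fin]

lemma two_mul_ncard_edgeSet_partGraph_add_sum_sq (p : Fin n → Fin r) :
    2 * (partGraph p).edgeSet.ncard + ∑ i, #{v | p v = i} ^ 2 = n ^ 2 := by
  rw [Set.ncard_eq_toFinset_card', ← edgeFinset, ← sum_degrees_eq_twice_card_edges,
    ← sum_card_fiber_apply_eq_sum_sq, ← sum_add_distrib]
  simp [degree_partGraph_add_card_fiber, sq]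

lemma turanGraph_eq_partGraph (hr : 0 < r) :
    turanGraph n r = partGraph fun v : Fin n => (⟨v % r, Nat.mod_lt _ hr⟩ : Fin r) := by
  ext u v
  simp [turanGraph, partGraph, Fin.ext_iff]

lemma card_filter_mod_eq_le (i : ℕ) : #{v : Fin n | v % r = i} ≤ n / r + 1 := by
  have hinj : Set.InjOn (fun v : Fin n => (v : ℕ) / r) ({v : Fin n | v % r = i} : Finset _) := by
    intro v hv w hw hvw
    simp only [coe_filter, mem_univ, true_and, Set.mem_ofPred_eq] at hv hw
    exact Fin.ext (by rw [← Nat.div_add_mod v r, ← Nat.div_add_mod w r, hv, hw]; simp_all)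
  simpa using card_le_card_of_injOn _
    (fun v _ => mem_range.2 (Nat.lt_succ_of_le (Nat.div_le_div_right v.2.le))) hinj

lemma sub_one_mul_sq_le_mul_ncard_edgeSet_turanGraph_add :
    (r - 1) * n ^ 2 ≤ 2 * r * (turanGraph n r).edgeSet.ncard + r * n := by
  rcases r.eq_zero_or_pos with rfl | hr
  · simp
  set q : Fin n → Fin r := fun v => ⟨v % r, Nat.mod_lt _ hr⟩
  have hsq : ∑ i, #{v | q v = i} ^ 2 ≤ n * (n / r + 1) := calc
    ∑ i, #{v | q v = i} ^ 2 ≤ ∑ i, #{v | q v = i} * (n / r + 1) := by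
      refine sum_le_sum fun i _ => ?_
      rw [sq]
      gcongr
      simpa [q, Fin.ext_iff] using card_filter_mod_eq_le (n := n) (r := r) i
    _ = n * (n / r + 1) := by rw [← sum_mul, sum_card_fiber, Fintype.card_fin]
  have hedges := two_mul_ncard_edgeSet_partGraph_add_sum_sq q
  rw [← turanGraph_eq_partGraph hr] at hedges
  have hdiv : r * (n / r) ≤ n := Nat.mul_div_le n r
  zify [hr] at *
  nlinarith

lemma sq_sub_sq_div_sub_le_two_mul_ncard_edgeSet_turanGraph (hr : 0 < r) :
    (n : ℝ) ^ 2 - n ^ 2 / r - n ≤ 2 * (turanGraph n r).edgeSet.ncard := by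
  have h := sub_one_mul_sq_le_mul_ncard_edgeSet_turanGraph_add (n := n) (r := r)
  rw [← Nat.cast_le (α := ℝ)] at h
  push_cast [Nat.cast_sub hr] at h
  rw [← mul_le_mul_iff_of_pos_left (by positivity : (0 : ℝ) < r)]
  field_simp
  linarith

end PartGraph

theorem stmt_9_general (n r : ℕ) (p : Fin n → Fin r)
    (hunbal : ∃ i : Fin r, ({v : Fin n | p v = i}.ncard : ℝ) < (n : ℝ) / (2 * r)) :
    ((partGraph p).edgeSet.ncard : ℝ)
      ≤ ((SimpleGraph.turanGraph n r).edgeSet.ncard : ℝ)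
          - (n : ℝ) ^ 2 / (16 * (r : ℝ) ^ 2) + n := by
  obtain ⟨i, hi⟩ := hunbal
  rw [Set.ncard_eq_toFinset_card', Set.toFinset_ofPred] at hi
  have hedges : 2 * ((partGraph p).edgeSet.ncard : ℝ) + ∑ j, (#{v | p v = j} : ℝ) ^ 2 = n ^ 2 := by
    exact_mod_cast two_mul_ncard_edgeSet_partGraph_add_sum_sq p
  have hsum : ∑ j, (#{v | p v = j} : ℝ) = n := by
    rw [← Nat.cast_sum, sum_card_fiber, Fintype.card_fin]
  have hsq := sq_sum_div_card_add_sq_le_sum_sq_of_le (f := fun j => (#{v | p v = j} : ℝ))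
    (i := i) (by rw [hsum]; positivity) (by rw [hsum, Fintype.card_fin]; exact hi.le)
  rw [hsum, Fintype.card_fin] at hsq
  have hturan := sq_sub_sq_div_sub_le_two_mul_ncard_edgeSet_turanGraph (n := n) i.pos
  have hquarter : ((n : ℝ) / (2 * r)) ^ 2 = 4 * (n ^ 2 / (16 * r ^ 2)) := by
    field_simp
    ring
  have hgap_nonneg : (0 : ℝ) ≤ n ^ 2 / (16 * r ^ 2) := by positivity
  linarith

theorem stmt_9 (n r : ℕ) (hr : 2 ≤ r) (p : Fin n → Fin r)
    (hunbal : ∃ i : Fin r, ({v : Fin n | p v = i}.ncard : ℝ) < (n : ℝ) / (2 * r)) :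
    ((partGraph p).edgeSet.ncard : ℝ)
      ≤ ((SimpleGraph.turanGraph n r).edgeSet.ncard : ℝ)
          - (n : ℝ) ^ 2 / (16 * (r : ℝ) ^ 2) + n :=
  stmt_9_general n r p hunbal
end

section
/- Let n and k be positive integers, let R = R(n;k) be the k-colour Ramsey number of K_n, and let N ≥ R. Then every colouring c of the edges of K_N with colours {1,...,k+1} either assigns colour k+1 to at least (1/2)·(N/R)² edges, or contains at least (1/2)·(N/R)^n monochromatic copies of K_n in one of the colours 1,...,k. -/
/-- An edge colouring of `K_N` (edges are non-diagonal elements of `Sym2 (Fin N)`)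
with `k` colours has a monochromatic copy of `K_n`. -/
def hasMonoKn (N n k : ℕ) (c : Sym2 (Fin N) → Fin k) : Prop :=
  ∃ i : Fin k, ∃ S : Finset (Fin N), S.card = n ∧
    ∀ u ∈ S, ∀ v ∈ S, u ≠ v → c s(u, v) = i

/-- The `k`-colour Ramsey number of `K_n`: the least `N` such that every
`k`-colouring of the edges of `K_N` contains a monochromatic `K_n`. -/
noncomputable def ramseyNumber (n k : ℕ) : ℕ :=
  sInf {N : ℕ | ∀ c : Sym2 (Fin N) → Fin k, hasMonoKn N n k c}

lemma myDescChoose (m R N : ℕ) (h1 : m ≤ R) (h2 : R ≤ N) :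
    N.descFactorial m * (N - m).choose (R - m) = R.descFactorial m * N.choose R := by
  induction m with
  | zero => simp
  | succ m ih =>
    have hm : m ≤ R := Nat.le_of_succ_le h1
    have ihm := ih hm
    have hRm : 1 ≤ R - m := by omega
    have hNm : 1 ≤ N - m := by omega
    have step : (N - m) * (N - m - 1).choose (R - m - 1) = (R - m) * (N - m).choose (R - m) := by
      have h := Nat.add_one_mul_choose_eq (N - m - 1) (R - m - 1)
      have e1 : N - m - 1 + 1 = N - m := by omega
      have e2 : R - m - 1 + 1 = R - m := by omega
      rw [e1, e2] at h
      rw [h, Nat.mul_comm]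
    have e3 : N - (m + 1) = N - m - 1 := by omega
    have e4 : R - (m + 1) = R - m - 1 := by omega
    rw [Nat.descFactorial_succ, Nat.descFactorial_succ, e3, e4]
    calc (N - m) * N.descFactorial m * ((N - m - 1).choose (R - m - 1))
        = N.descFactorial m * ((N - m) * (N - m - 1).choose (R - m - 1)) := by ring
      _ = N.descFactorial m * ((R - m) * (N - m).choose (R - m)) := by rw [step]
      _ = (R - m) * (N.descFactorial m * (N - m).choose (R - m)) := by ring
      _ = (R - m) * (R.descFactorial m * N.choose R) := by rw [ihm]
      _ = (R - m) * R.descFactorial m * N.choose R := by ring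

lemma myPowDesc (m R N : ℕ) (h2 : R ≤ N) :
    N ^ m * R.descFactorial m ≤ R ^ m * N.descFactorial m := by
  induction m with
  | zero => simp
  | succ m ih =>
    rcases Nat.le_total m R with hm | hm
    · have h1 : N * (R - m) ≤ R * (N - m) := by
        have e1 : N * (R - m) + N * m = N * R := by rw [← Nat.mul_add]; congr 1; omega
        have e2 : R * (N - m) + R * m = R * N := by
          rw [← Nat.mul_add]; congr 1; omega
        have h3 : R * m ≤ N * m := Nat.mul_le_mul_right m h2
        have e5 : R * N = N * R := Nat.mul_comm R N
        omega
      calc N ^ (m + 1) * R.descFactorial (m + 1)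
          = (N * (R - m)) * (N ^ m * R.descFactorial m) := by
            rw [Nat.descFactorial_succ]; ring
        _ ≤ (R * (N - m)) * (R ^ m * N.descFactorial m) := Nat.mul_le_mul h1 ih
        _ = R ^ (m + 1) * N.descFactorial (m + 1) := by
            rw [Nat.descFactorial_succ]; ring
    · have hz : R - m = 0 := by omega
      simp [Nat.descFactorial_succ, hz]

lemma myKeyIneq (m R N cnt : ℕ) (h1 : m ≤ R) (h2 : R ≤ N)
    (h : N.choose R ≤ cnt * (N - m).choose (R - m)) :
    N ^ m ≤ cnt * R ^ m := by
  have hd : 0 < R.descFactorial m :=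
    Nat.pos_of_ne_zero (fun h0 => by
      have := Nat.descFactorial_eq_zero_iff_lt.mp h0; omega)
  have hc : 0 < (N - m).choose (R - m) := Nat.choose_pos (by omega)
  have hpos : 0 < R.descFactorial m * (N - m).choose (R - m) := Nat.mul_pos hd hc
  have chain : N ^ m * (R.descFactorial m * (N - m).choose (R - m))
      ≤ (cnt * R ^ m) * (R.descFactorial m * (N - m).choose (R - m)) := by
    calc N ^ m * (R.descFactorial m * (N - m).choose (R - m))
        = (N ^ m * R.descFactorial m) * (N - m).choose (R - m) := by ring
      _ ≤ (R ^ m * N.descFactorial m) * (N - m).choose (R - m) :=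
          Nat.mul_le_mul_right _ (myPowDesc m R N h2)
      _ = R ^ m * (N.descFactorial m * (N - m).choose (R - m)) := by ring
      _ = R ^ m * (R.descFactorial m * N.choose R) := by rw [myDescChoose m R N h1 h2]
      _ ≤ R ^ m * (R.descFactorial m * (cnt * (N - m).choose (R - m))) :=
          Nat.mul_le_mul_left _ (Nat.mul_le_mul_left _ h)
      _ = (cnt * R ^ m) * (R.descFactorial m * (N - m).choose (R - m)) := by ring
  exact Nat.le_of_mul_le_mul_right chain hpos

lemma myRealConv (m R N E : ℕ) (hR : 0 < R) (h : N ^ m ≤ 2 * E * R ^ m) :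
    (1 / 2 : ℝ) * ((N : ℝ) / (R : ℝ)) ^ m ≤ (E : ℝ) := by
  have hRpos : (0 : ℝ) < (R : ℝ) ^ m := by positivity
  have hcast : (N : ℝ) ^ m ≤ 2 * (E : ℝ) * (R : ℝ) ^ m := by exact_mod_cast h
  rw [div_pow, mul_comm, div_mul_eq_mul_div, div_le_iff₀ hRpos]
  nlinarith

lemma myCountSupersets {N r R : ℕ} (S : Finset (Fin N)) (hS : S.card = r)
    (hrR : r ≤ R) (_hRN : R ≤ N) :
    ((Finset.powersetCard R (Finset.univ : Finset (Fin N))).filter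
      (fun A => S ⊆ A)).card = (N - r).choose (R - r) := by
  classical
  have hcompl : Sᶜ.card = N - r := by
    rw [Finset.card_compl, Fintype.card_fin, hS]
  have h := Finset.card_powersetCard (R - r) Sᶜ
  rw [hcompl] at h
  rw [← h]
  apply Finset.card_bij (fun A _ => A \ S)
  · intro A hA
    rw [Finset.mem_filter, Finset.mem_powersetCard_univ] at hA
    rw [Finset.mem_powersetCard]
    constructor
    · intro x hx
      rw [Finset.mem_sdiff] at hx
      exact Finset.mem_compl.mpr hx.2
    · rw [Finset.card_sdiff_of_subset hA.2, hA.1, hS]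
  · intro A1 h1 A2 h2 heq
    rw [Finset.mem_filter] at h1 h2
    have e1 : A1 \ S ∪ S = A1 := Finset.sdiff_union_of_subset h1.2
    have e2 : A2 \ S ∪ S = A2 := Finset.sdiff_union_of_subset h2.2
    rw [← e1, ← e2, heq]
  · intro B hB
    rw [Finset.mem_powersetCard] at hB
    have hdisj : Disjoint B S := by
      rw [Finset.disjoint_left]
      intro x hx hxS
      exact Finset.mem_compl.mp (hB.1 hx) hxS
    refine ⟨B ∪ S, ?_, ?_⟩
    · rw [Finset.mem_filter, Finset.mem_powersetCard_univ]
      refine ⟨?_, Finset.subset_union_right⟩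
      rw [Finset.card_union_of_disjoint hdisj, hB.2, hS]
      omega
    · rw [Finset.union_sdiff_right, Finset.sdiff_eq_self_of_disjoint hdisj]

theorem stmt_10 (n k N : ℕ) (hn : 0 < n) (hk : 0 < k)
    (hN : ramseyNumber n k ≤ N) (c : Sym2 (Fin N) → Fin (k + 1)) :
    (1 / 2 : ℝ) * ((N : ℝ) / (ramseyNumber n k : ℝ)) ^ 2
        ≤ ({e : Sym2 (Fin N) | ¬ e.IsDiag ∧ c e = Fin.last k}.ncard : ℝ)
    ∨ (1 / 2 : ℝ) * ((N : ℝ) / (ramseyNumber n k : ℝ)) ^ n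
        ≤ ((∑ i : Fin k, {S : Finset (Fin N) | S.card = n ∧
              ∀ u ∈ S, ∀ v ∈ S, u ≠ v → c s(u, v) = Fin.castSucc i}.ncard : ℕ) : ℝ) := by
  classical
  rcases Nat.eq_zero_or_pos (ramseyNumber n k) with hR0 | hRpos
  · left
    rw [hR0]
    norm_num
  have hSne : {M : ℕ | ∀ c' : Sym2 (Fin M) → Fin k, hasMonoKn M n k c'}.Nonempty := by
    by_contra hne
    rw [Set.not_nonempty_iff_eq_empty] at hne
    have h0 : ramseyNumber n k = 0 := by rw [ramseyNumber, hne, Nat.sInf_empty]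
    omega
  have hramsey : ∀ c' : Sym2 (Fin (ramseyNumber n k)) → Fin k,
      hasMonoKn (ramseyNumber n k) n k c' := by
    have h := Nat.sInf_mem hSne
    exact h
  have hnR : n ≤ ramseyNumber n k := by
    have h := hramsey (fun _ => ⟨0, hk⟩)
    unfold hasMonoKn at h
    obtain ⟨i, S0, hS0, -⟩ := h
    have hle : S0.card ≤ Fintype.card (Fin (ramseyNumber n k)) := Finset.card_le_univ S0
    rw [hS0, Fintype.card_fin] at hle
    exact hle
  set R' := ramseyNumber n k with hRdef
  by_cases hn1 : n = 1
  · right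
    subst hn1
    have hcard1 : ∀ i : Fin k, ({S : Finset (Fin N) | S.card = 1 ∧
        ∀ u ∈ S, ∀ v ∈ S, u ≠ v → c s(u, v) = Fin.castSucc i}.ncard) = N := by
      intro i
      have hset : {S : Finset (Fin N) | S.card = 1 ∧
          ∀ u ∈ S, ∀ v ∈ S, u ≠ v → c s(u, v) = Fin.castSucc i}
          = ↑(Finset.powersetCard 1 (Finset.univ : Finset (Fin N))) := by
        ext S
        simp only [Set.mem_setOf_eq, Finset.mem_coe, Finset.mem_powersetCard_univ]
        constructor
        · exact fun h => h.1
        · intro h1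
          refine ⟨h1, ?_⟩
          intro u hu v hv huv
          exact absurd (Finset.card_le_one.mp (le_of_eq h1) u hu v hv) huv
      rw [hset, Set.ncard_coe_finset, Finset.card_powersetCard, Finset.card_univ,
        Fintype.card_fin, Nat.choose_one_right]
    have hsum : (∑ i : Fin k, ({S : Finset (Fin N) | S.card = 1 ∧
        ∀ u ∈ S, ∀ v ∈ S, u ≠ v → c s(u, v) = Fin.castSucc i}.ncard)) = k * N := by
      rw [Finset.sum_congr rfl (fun i _ => hcard1 i)]
      simp [Finset.sum_const, Finset.card_univ]
    rw [hsum]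
    have hR1 : (1 : ℝ) ≤ (R' : ℝ) := by exact_mod_cast hRpos
    have hNn : (0 : ℝ) ≤ (N : ℝ) := Nat.cast_nonneg N
    have hdiv : (N : ℝ) / (R' : ℝ) ≤ (N : ℝ) := div_le_self hNn hR1
    have hk1 : (1 : ℝ) ≤ (k : ℝ) := by exact_mod_cast hk
    have hkN : (N : ℝ) ≤ (k : ℝ) * (N : ℝ) := by nlinarith
    push_cast
    rw [pow_one]
    linarith
  have hn2 : 2 ≤ n := by omega
  have hR2 : 2 ≤ R' := le_trans hn2 hnR
  have hRN : R' ≤ N := hN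
  have hN0 : 0 < N := by omega
  set P := Finset.powersetCard R' (Finset.univ : Finset (Fin N)) with hPdef
  set Bad := P.filter (fun A => ∃ e : Sym2 (Fin N),
    (¬ e.IsDiag ∧ c e = Fin.last k) ∧ ∀ x ∈ e, x ∈ A) with hBad
  set Good := P.filter (fun A => ¬ ∃ e : Sym2 (Fin N),
    (¬ e.IsDiag ∧ c e = Fin.last k) ∧ ∀ x ∈ e, x ∈ A) with hGood
  have hsplit : Bad.card + Good.card = N.choose R' := by
    rw [hBad, hGood, Finset.card_filter_add_card_filter_not, hPdef,
      Finset.card_powersetCard, Finset.card_univ, Fintype.card_fin]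
  set EF := Finset.univ.filter (fun e : Sym2 (Fin N) =>
    ¬ e.IsDiag ∧ c e = Fin.last k) with hEF
  set MS := Finset.univ.filter (fun S : Finset (Fin N) => S.card = n ∧
    ∃ i : Fin k, ∀ u ∈ S, ∀ v ∈ S, u ≠ v → c s(u, v) = Fin.castSucc i) with hMS
  -- Bad count
  have hBadCard : Bad.card ≤ (N - 2).choose (R' - 2) * EF.card := by
    set f : Finset (Fin N) → Sym2 (Fin N) := fun A =>
      if h : ∃ e : Sym2 (Fin N), (¬ e.IsDiag ∧ c e = Fin.last k) ∧ ∀ x ∈ e, x ∈ A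
      then h.choose else s(⟨0, hN0⟩, ⟨0, hN0⟩) with hf
    apply Finset.card_le_mul_card_image_of_maps_to (f := f) (t := EF)
    · intro A hA
      have hbA : ∃ e : Sym2 (Fin N), (¬ e.IsDiag ∧ c e = Fin.last k) ∧ ∀ x ∈ e, x ∈ A :=
        (Finset.mem_filter.mp hA).2
      rw [hEF, Finset.mem_filter]
      refine ⟨Finset.mem_univ _, ?_⟩
      simp only [hf, dif_pos hbA]
      exact hbA.choose_spec.1
    · intro e
      induction e using Sym2.ind with
      | _ u v =>
        intro heF
        rw [hEF, Finset.mem_filter] at heF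
        have huv : u ≠ v := fun h => heF.2.1 (Sym2.mk_isDiag_iff.mpr h)
        have hsub : (Bad.filter (fun A => f A = s(u, v))) ⊆
            P.filter (fun A => ({u, v} : Finset (Fin N)) ⊆ A) := by
          intro A hA
          rw [Finset.mem_filter] at hA ⊢
          obtain ⟨hABad, hfA⟩ := hA
          rw [hBad, Finset.mem_filter] at hABad
          have hbA : ∃ e : Sym2 (Fin N), (¬ e.IsDiag ∧ c e = Fin.last k) ∧ ∀ x ∈ e, x ∈ A :=
            hABad.2
          have hspec := hbA.choose_spec
          simp only [hf, dif_pos hbA] at hfA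
          refine ⟨hABad.1, ?_⟩
          intro x hx
          rw [Finset.mem_insert, Finset.mem_singleton] at hx
          apply hspec.2
          rw [hfA]
          rcases hx with rfl | rfl
          · exact Sym2.mem_mk_left _ _
          · exact Sym2.mem_mk_right _ _
        calc (Bad.filter (fun A => f A = s(u, v))).card
            ≤ (P.filter (fun A => ({u, v} : Finset (Fin N)) ⊆ A)).card :=
              Finset.card_le_card hsub
          _ = (N - 2).choose (R' - 2) := by
              rw [hPdef]
              exact myCountSupersets _ (Finset.card_pair huv) hR2 hRN
  -- Good : every good set contains a mono copy
  have hGoodMono : ∀ A ∈ Good, ∃ S : Finset (Fin N), S ⊆ A ∧ S.card = n ∧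
      ∃ i : Fin k, ∀ u ∈ S, ∀ v ∈ S, u ≠ v → c s(u, v) = Fin.castSucc i := by
    intro A hA
    rw [hGood, Finset.mem_filter] at hA
    obtain ⟨hAP, hAgood⟩ := hA
    have hAcard : A.card = R' := by
      rw [hPdef, Finset.mem_powersetCard_univ] at hAP
      exact hAP
    set g : Fin R' → Fin N := fun x => ((A.orderIsoOfFin hAcard) x : Fin N) with hg
    have hginj : Function.Injective g := fun a b hab =>
      (A.orderIsoOfFin hAcard).injective (Subtype.ext hab)
    have hgA : ∀ x, g x ∈ A := fun x => ((A.orderIsoOfFin hAcard) x).2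
    have hlt : ∀ x y : Fin R', x ≠ y → ((c s(g x, g y)) : Fin (k + 1)).val < k := by
      intro x y hxy
      have hne : c s(g x, g y) ≠ Fin.last k := by
        intro hcc
        apply hAgood
        refine ⟨s(g x, g y), ⟨?_, hcc⟩, ?_⟩
        · rw [Sym2.mk_isDiag_iff]
          exact fun h => hxy (hginj h)
        · intro z hz
          rcases Sym2.mem_iff.mp hz with rfl | rfl
          · exact hgA x
          · exact hgA y
      have h1 : (c s(g x, g y)).val < k + 1 := (c s(g x, g y)).isLt
      have h2 : (c s(g x, g y)).val ≠ k := by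
        intro h
        apply hne
        apply Fin.ext
        rw [h]
        rfl
      omega
    set c' : Sym2 (Fin R') → Fin k := fun e =>
      if h : ((c (e.map g)).val < k) then ⟨(c (e.map g)).val, h⟩ else ⟨0, hk⟩ with hc'def
    have h := hramsey c'
    unfold hasMonoKn at h
    obtain ⟨i, S', hS'card, hS'mono⟩ := h
    refine ⟨S'.image g, ?_, ?_, i, ?_⟩
    · intro x hx
      obtain ⟨y, -, rfl⟩ := Finset.mem_image.mp hx
      exact hgA y
    · rw [Finset.card_image_of_injective _ hginj, hS'card]
    · intro u hu v hv huv
      obtain ⟨x, hxS, rfl⟩ := Finset.mem_image.mp hu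
      obtain ⟨y, hyS, rfl⟩ := Finset.mem_image.mp hv
      have hxy : x ≠ y := fun h => huv (by rw [h])
      have hmono := hS'mono x hxS y hyS hxy
      have hltxy := hlt x y hxy
      have hc' : c' s(x, y) = ⟨(c s(g x, g y)).val, hltxy⟩ := by
        simp only [hc'def, Sym2.map_pair_eq]
        rw [dif_pos hltxy]
      rw [hc'] at hmono
      apply Fin.ext
      rw [Fin.coe_castSucc, ← hmono]
  -- Good count
  have hGoodCard : Good.card ≤ (N - n).choose (R' - n) * MS.card := by
    set fS : Finset (Fin N) → Finset (Fin N) := fun A =>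
      if h : ∃ S : Finset (Fin N), S ⊆ A ∧ S.card = n ∧
          ∃ i : Fin k, ∀ u ∈ S, ∀ v ∈ S, u ≠ v → c s(u, v) = Fin.castSucc i
      then h.choose else ∅ with hfS
    apply Finset.card_le_mul_card_image_of_maps_to (f := fS) (t := MS)
    · intro A hA
      have hex := hGoodMono A hA
      rw [hMS, Finset.mem_filter]
      refine ⟨Finset.mem_univ _, ?_⟩
      simp only [hfS, dif_pos hex]
      exact ⟨hex.choose_spec.2.1, hex.choose_spec.2.2⟩
    · intro S hS
      rw [hMS, Finset.mem_filter] at hS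
      have hsub : Good.filter (fun A => fS A = S) ⊆ P.filter (fun A => S ⊆ A) := by
        intro A hA
        rw [Finset.mem_filter] at hA ⊢
        obtain ⟨hAGood, hfA⟩ := hA
        have hex := hGoodMono A hAGood
        rw [hGood, Finset.mem_filter] at hAGood
        simp only [hfS, dif_pos hex] at hfA
        refine ⟨hAGood.1, ?_⟩
        rw [← hfA]
        exact hex.choose_spec.1
      calc (Good.filter (fun A => fS A = S)).card
          ≤ (P.filter (fun A => S ⊆ A)).card := Finset.card_le_card hsub
        _ = (N - n).choose (R' - n) := by
            rw [hPdef]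
            exact myCountSupersets _ hS.2.1 hnR hRN
  -- MS card vs sum of copies
  have hMSsum : MS.card ≤ ∑ i : Fin k, (Finset.univ.filter (fun S : Finset (Fin N) =>
      S.card = n ∧ ∀ u ∈ S, ∀ v ∈ S, u ≠ v → c s(u, v) = Fin.castSucc i)).card := by
    have hsub : MS ⊆ Finset.univ.biUnion (fun i : Fin k =>
        Finset.univ.filter (fun S : Finset (Fin N) => S.card = n ∧
          ∀ u ∈ S, ∀ v ∈ S, u ≠ v → c s(u, v) = Fin.castSucc i)) := by
      intro S hS
      rw [hMS, Finset.mem_filter] at hS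
      obtain ⟨-, hcard, i, hi⟩ := hS
      exact Finset.mem_biUnion.mpr ⟨i, Finset.mem_univ i,
        Finset.mem_filter.mpr ⟨Finset.mem_univ _, hcard, hi⟩⟩
    exact le_trans (Finset.card_le_card hsub) Finset.card_biUnion_le
  -- ncard conversions
  have hEreal : ({e : Sym2 (Fin N) | ¬ e.IsDiag ∧ c e = Fin.last k}.ncard) = EF.card := by
    rw [← Set.ncard_coe_finset]
    congr 1
    ext e
    simp [hEF]
  have hCreal : ∀ i : Fin k, ({S : Finset (Fin N) | S.card = n ∧
      ∀ u ∈ S, ∀ v ∈ S, u ≠ v → c s(u, v) = Fin.castSucc i}.ncard)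
      = (Finset.univ.filter (fun S : Finset (Fin N) => S.card = n ∧
          ∀ u ∈ S, ∀ v ∈ S, u ≠ v → c s(u, v) = Fin.castSucc i)).card := by
    intro i
    rw [← Set.ncard_coe_finset]
    congr 1
    ext S
    simp
  have hchoice : N.choose R' ≤ 2 * Bad.card ∨ N.choose R' ≤ 2 * Good.card := by omega
  rcases hchoice with hbig | hbig
  · left
    have h1 : N.choose R' ≤ (2 * EF.card) * (N - 2).choose (R' - 2) := by
      calc N.choose R' ≤ 2 * Bad.card := hbig
        _ ≤ 2 * ((N - 2).choose (R' - 2) * EF.card) := Nat.mul_le_mul_left 2 hBadCard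
        _ = (2 * EF.card) * (N - 2).choose (R' - 2) := by ring
    have hkey := myKeyIneq 2 R' N (2 * EF.card) hR2 hRN h1
    rw [hEreal]
    exact myRealConv 2 R' N EF.card (by omega) hkey
  · right
    set cnt := ∑ i : Fin k, (Finset.univ.filter (fun S : Finset (Fin N) =>
      S.card = n ∧ ∀ u ∈ S, ∀ v ∈ S, u ≠ v → c s(u, v) = Fin.castSucc i)).card with hcnt
    have h1 : N.choose R' ≤ (2 * cnt) * (N - n).choose (R' - n) := by
      calc N.choose R' ≤ 2 * Good.card := hbig
        _ ≤ 2 * ((N - n).choose (R' - n) * MS.card) := Nat.mul_le_mul_left 2 hGoodCard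
        _ ≤ 2 * ((N - n).choose (R' - n) * cnt) :=
            Nat.mul_le_mul_left 2 (Nat.mul_le_mul_left _ hMSsum)
        _ = (2 * cnt) * (N - n).choose (R' - n) := by ring
    have hkey := myKeyIneq n R' N (2 * cnt) hnR hRN h1
    have hsum : (∑ i : Fin k, ({S : Finset (Fin N) | S.card = n ∧
        ∀ u ∈ S, ∀ v ∈ S, u ≠ v → c s(u, v) = Fin.castSucc i}.ncard)) = cnt := by
      rw [hcnt]
      exact Finset.sum_congr rfl (fun i _ => hCreal i)
    rw [hsum]
    exact myRealConv n R' N cnt (by omega) hkey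
end

section
/- Suppose that for a pair of balanced r-partitions Π = {P_1,...,P_r} and Π' = {P_1',...,P_r'} of {1,...,n} with Π ≠ Π', we define s as the maximum over j of the size of the second largest set among {P_j ∩ P_1',..., P_j ∩ P_r'}. Then 1 ≤ s and e(K_Π ∩ K_{Π'}) ≤ e(K_Π) − s·n/(2r⁴). -/
/-- The second largest value of a family `f : Fin r → ℕ`, computed as the
maximum over pairs of distinct indices of the minimum of the two values. -/
noncomputable def secondLargest {r : ℕ} (f : Fin r → ℕ) : ℕ :=
  (Finset.univ.filter fun q : Fin r × Fin r => q.1 ≠ q.2).sup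
    fun q => min (f q.1) (f q.2)

/-
View the subclasses `P_j ∩ P'_i` as the cells of an `r × r` array with rows the classes of `Π`
and columns the classes of `Π'`.

If `s = 0`, every row meets a single column, so `Π'` is coarser than `Π`; as every class of `Π'`
is nonempty, the induced map of rows to columns is onto, hence a bijection, and `Π' = Π`.

Otherwise some row `j₀` has two cells of size `≥ s`, in columns `i₁ ≠ i₂`. Each row `j` has a
cell of size `≥ n/(2r²)`, in a column `c j`. If `c` is injective it is onto, so some row `j ≠ j₀`
has `c j ∈ {i₁, i₂}`; if not, two rows share a column, and their cells have size
`≥ n/(2r²) ≥ s/r²` since `2s ≤ n`. Either way some column contains cells of sizes `≥ s/r²` and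
`≥ n/(2r²)` in different rows, and each pair of vertices from them is an edge of `K_Π` missing
from `K_Π ∩ K_Π'`.
-/

theorem SimpleGraph.ncard_edgeSet_add_ncard_mul_ncard_le {V : Type*} [Finite V]
    {G H : SimpleGraph V} (hHG : H ≤ G) {A B : Set V}
    (hAB : ∀ a ∈ A, ∀ b ∈ B, G.Adj a b ∧ ¬ H.Adj a b) :
    H.edgeSet.ncard + A.ncard * B.ncard ≤ G.edgeSet.ncard := by
  have hmaps : ∀ x ∈ A ×ˢ B, s(x.1, x.2) ∈ G.edgeSet \ H.edgeSet := fun x hx =>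
    hAB _ hx.1 _ hx.2
  have hinj : Set.InjOn (fun x : V × V => s(x.1, x.2)) (A ×ˢ B) := by
    rintro ⟨a, b⟩ ⟨ha, hb⟩ ⟨a', b'⟩ ⟨ha', hb'⟩ h
    rcases Sym2.eq_iff.mp h with ⟨rfl, rfl⟩ | ⟨rfl, rfl⟩
    · rfl
    · -- `A` and `B` are disjoint because `G` has no loops
      exact absurd (hAB a ha a hb').1 (G.loopless.irrefl a)
  rw [← Set.ncard_prod, ← Set.ncard_sdiff_add_ncard_of_subset (SimpleGraph.edgeSet_mono hHG),
    add_comm]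
  exact Nat.add_le_add_right (Set.ncard_le_ncard_of_injOn _ hmaps hinj) _

theorem le_secondLargest_iff {r : ℕ} {f : Fin r → ℕ} {a : ℕ} (ha : 0 < a) :
    a ≤ secondLargest f ↔ ∃ i i', i ≠ i' ∧ a ≤ f i ∧ a ≤ f i' := by
  simp [secondLargest, Finset.le_sup_iff ha]

theorem Function.FactorsThrough.exists_perm_eq_comp {α ι : Type*} [Finite ι] {p q : α → ι}
    (h : q.FactorsThrough p) (hq : q.Surjective) : ∃ σ : Equiv.Perm ι, ∀ v, q v = σ (p v) := by
  have hf : ∀ v, Function.extend p q id (p v) = q v := h.extend_apply id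
  have hsurj : (Function.extend p q id).Surjective := fun i =>
    let ⟨v, hv⟩ := hq i; ⟨p v, (hf v).trans hv⟩
  exact ⟨Equiv.ofBijective _ (Finite.surjective_iff_bijective.mp hsurj), fun v => (hf v).symm⟩

theorem one_le_sup_secondLargest_of_not_factorsThrough {α : Type*} [Finite α] {r : ℕ}
    {p q : α → Fin r} (h : ¬ q.FactorsThrough p) :
    1 ≤ Finset.univ.sup fun j => secondLargest fun i => {v | p v = j ∧ q v = i}.ncard := by
  obtain ⟨v, w, hpvw, hqvw⟩ : ∃ v w, p v = p w ∧ q v ≠ q w := by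
    simpa [Function.FactorsThrough] using h
  rw [Finset.le_sup_iff one_pos]
  refine ⟨p v, Finset.mem_univ _, (le_secondLargest_iff one_pos).2 ⟨q v, q w, hqvw, ?_, ?_⟩⟩
  · exact (Set.ncard_pos).2 ⟨v, rfl, rfl⟩
  · exact (Set.ncard_pos).2 ⟨w, hpvw.symm, rfl⟩

section Cells

variable {α ι : Type*} (p q : α → ι)

theorem ncard_cell_add_ncard_cell_le [Finite α] (j : ι) {i i' : ι} (hi : i ≠ i') :
    {v | p v = j ∧ q v = i}.ncard + {v | p v = j ∧ q v = i'}.ncard ≤ Nat.card α := by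
  rw [← Set.ncard_union_eq]
  · exact Set.ncard_le_card _
  · exact Set.disjoint_left.2 fun v hv hv' => hi (hv.2.symm.trans hv'.2)

theorem exists_ncard_le_card_mul_ncard_cell [Fintype α] [Fintype ι] [DecidableEq ι] [Nonempty ι]
    (j : ι) :
    ∃ i, ({v | p v = j}.ncard : ℝ) ≤ Fintype.card ι * {v | p v = j ∧ q v = i}.ncard := by
  have hr : (0 : ℝ) < Fintype.card ι := by exact_mod_cast Fintype.card_pos
  obtain ⟨i, -, hi⟩ := Finset.exists_le_card_fiber_of_nsmul_le_card_of_maps_to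
    (s := {v | p v = j}) (f := q) (fun _ _ => Finset.mem_univ _) Finset.univ_nonempty
    (b := (({v | p v = j} : Finset α).card : ℝ) / Fintype.card ι)
    (by rw [Finset.card_univ, nsmul_eq_mul, mul_div_cancel₀ _ hr.ne'])
  have hP : {v | p v = j}.ncard = ({v | p v = j} : Finset α).card := by
    rw [← Set.ncard_coe_finset]; simp
  have hcell :
      {v | p v = j ∧ q v = i}.ncard = ({v ∈ {v | p v = j} | q v = i} : Finset α).card := by
    rw [← Set.ncard_coe_finset]; simp
  refine ⟨i, ?_⟩
  rw [hP, hcell, mul_comm, ← div_le_iff₀ hr]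
  exact hi

theorem exists_column_with_two_large_cells [Fintype α] [Fintype ι] [DecidableEq ι]
    (hbal : ∀ j, (Nat.card α : ℝ) / (2 * Fintype.card ι) ≤ {v | p v = j}.ncard)
    {s : ℕ} {j₀ i₁ i₂ : ι} (hi : i₁ ≠ i₂)
    (h₁ : s ≤ {v | p v = j₀ ∧ q v = i₁}.ncard) (h₂ : s ≤ {v | p v = j₀ ∧ q v = i₂}.ncard) :
    ∃ i j j', j ≠ j' ∧ (s : ℝ) / Fintype.card ι ^ 2 ≤ {v | p v = j ∧ q v = i}.ncard ∧
      (Nat.card α : ℝ) / (2 * Fintype.card ι ^ 2) ≤ {v | p v = j' ∧ q v = i}.ncard := by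
  have : Nonempty ι := ⟨i₁⟩
  set r : ℝ := (Fintype.card ι : ℝ)
  have hr : 1 ≤ r := Nat.one_le_cast.2 Fintype.card_pos
  have hlarge : ∀ j, ∃ i, (Nat.card α : ℝ) / (2 * r ^ 2) ≤ {v | p v = j ∧ q v = i}.ncard := by
    intro j
    obtain ⟨i, hi⟩ := exists_ncard_le_card_mul_ncard_cell p q j
    refine ⟨i, ?_⟩
    have := hbal j
    rw [div_le_iff₀ (by positivity)] at this ⊢
    nlinarith
  choose c hc using hlarge
  by_cases hinj : c.Injective
  · obtain ⟨j, hj, hcj⟩ : ∃ j, j ≠ j₀ ∧ (c j = i₁ ∨ c j = i₂) := by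
      obtain ⟨j₁, hj₁⟩ := Finite.injective_iff_surjective.1 hinj i₁
      obtain ⟨j₂, hj₂⟩ := Finite.injective_iff_surjective.1 hinj i₂
      by_cases h : j₁ = j₀
      · exact ⟨j₂, fun h' => hi (hj₁ ▸ hj₂ ▸ congrArg c (h.trans h'.symm)), Or.inr hj₂⟩
      · exact ⟨j₁, h, Or.inl hj₁⟩
    have hs : s ≤ {v | p v = j₀ ∧ q v = c j}.ncard := by rcases hcj with h | h <;> rwa [h]
    refine ⟨c j, j₀, j, hj.symm, ?_, hc j⟩
    calc (s : ℝ) / r ^ 2 ≤ s := div_le_self (by positivity) (one_le_pow₀ hr)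
      _ ≤ _ := by exact_mod_cast hs
  · obtain ⟨j, j', hcc, hjj'⟩ : ∃ j j', c j = c j' ∧ j ≠ j' := by
      simpa [Function.Injective] using hinj
    refine ⟨c j, j, j', hjj', ?_, hcc ▸ hc j'⟩
    have h2s : 2 * s ≤ Nat.card α := by
      have := ncard_cell_add_ncard_cell_le p q j₀ hi
      omega
    have h2s' : 2 * (s : ℝ) ≤ Nat.card α := by exact_mod_cast h2s
    calc (s : ℝ) / r ^ 2 ≤ (Nat.card α : ℝ) / (2 * r ^ 2) := by
          rw [div_le_div_iff₀ (by positivity) (by positivity)]; nlinarith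
      _ ≤ _ := hc j

end Cells

theorem ncard_edgeSet_partGraph_inf_le {n r : ℕ} (p q : Fin n → Fin r) {i j j' : Fin r}
    (hj : j ≠ j') :
    ((partGraph p ⊓ partGraph q).edgeSet.ncard : ℝ) ≤ (partGraph p).edgeSet.ncard
      - ({v | p v = j ∧ q v = i}.ncard : ℝ) * {v | p v = j' ∧ q v = i}.ncard := by
  have h := SimpleGraph.ncard_edgeSet_add_ncard_mul_ncard_le inf_le_left
    (G := partGraph p) (H := partGraph p ⊓ partGraph q)
    (A := {v | p v = j ∧ q v = i}) (B := {v | p v = j' ∧ q v = i})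
    fun a ⟨ha, ha'⟩ b ⟨hb, hb'⟩ =>
      ⟨fun h => hj (ha.symm.trans (h.trans hb)), fun h => h.2 (ha'.trans hb'.symm)⟩
  have := (Nat.cast_le (α := ℝ)).2 h
  push_cast at this
  linarith

theorem stmt_14_general (n r : ℕ) (p q : Fin n → Fin r)
    (hbalp : ∀ i : Fin r, (n : ℝ) / (2 * r) ≤ ({v : Fin n | p v = i}.ncard : ℝ))
    (hbalq : ∀ i : Fin r, (n : ℝ) / (2 * r) ≤ ({v : Fin n | q v = i}.ncard : ℝ))
    (hne : ¬ ∃ σ : Equiv.Perm (Fin r), ∀ v : Fin n, q v = σ (p v)) :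
    1 ≤ Finset.univ.sup (fun j : Fin r =>
        secondLargest fun i : Fin r => {v : Fin n | p v = j ∧ q v = i}.ncard)
    ∧ (((partGraph p ⊓ partGraph q).edgeSet.ncard : ℝ)
        ≤ ((partGraph p).edgeSet.ncard : ℝ)
          - ((Finset.univ.sup (fun j : Fin r =>
              secondLargest fun i : Fin r => {v : Fin n | p v = j ∧ q v = i}.ncard) : ℕ) : ℝ)
            * n / (2 * (r : ℝ) ^ 4)) := by
  have hn : 0 < n := Nat.pos_of_ne_zero <| by rintro rfl; exact hne ⟨1, fun v => v.elim0⟩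
  have hq : q.Surjective := fun i => by
    have : 0 < (n : ℝ) / (2 * r) := by have := i.pos; positivity
    obtain ⟨v, hv⟩ := Set.nonempty_of_ncard_ne_zero (s := {v | q v = i})
      (by exact_mod_cast ((hbalq i).trans_lt' this).ne')
    exact ⟨v, hv⟩
  set s := Finset.univ.sup fun j => secondLargest fun i => {v | p v = j ∧ q v = i}.ncard
  have hs : 1 ≤ s := one_le_sup_secondLargest_of_not_factorsThrough fun h =>
    hne (h.exists_perm_eq_comp hq)
  refine ⟨hs, ?_⟩
  obtain ⟨j₀, -, hj₀⟩ := (Finset.le_sup_iff (a := s) hs).1 le_rfl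
  obtain ⟨i₁, i₂, hi, h₁, h₂⟩ := (le_secondLargest_iff hs).1 hj₀
  obtain ⟨i, j, j', hjj', hA, hB⟩ :=
    exists_column_with_two_large_cells p q (by simpa using hbalp) hi h₁ h₂
  simp only [Nat.card_eq_fintype_card, Fintype.card_fin] at hA hB
  calc ((partGraph p ⊓ partGraph q).edgeSet.ncard : ℝ)
      ≤ (partGraph p).edgeSet.ncard
        - ({v | p v = j ∧ q v = i}.ncard : ℝ) * {v | p v = j' ∧ q v = i}.ncard :=
        ncard_edgeSet_partGraph_inf_le p q hjj'
    _ ≤ (partGraph p).edgeSet.ncard - (s / r ^ 2) * (n / (2 * r ^ 2)) := by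
        gcongr
    _ = (partGraph p).edgeSet.ncard - s * n / (2 * (r : ℝ) ^ 4) := by
        field_simp

theorem stmt_14 (n r : ℕ) (hr : 2 ≤ r) (p q : Fin n → Fin r)
    (hbalp : ∀ i : Fin r, (n : ℝ) / (2 * r) ≤ ({v : Fin n | p v = i}.ncard : ℝ))
    (hbalq : ∀ i : Fin r, (n : ℝ) / (2 * r) ≤ ({v : Fin n | q v = i}.ncard : ℝ))
    (hne : ¬ ∃ σ : Equiv.Perm (Fin r), ∀ v : Fin n, q v = σ (p v)) :
    1 ≤ Finset.univ.sup (fun j : Fin r =>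
        secondLargest fun i : Fin r => {v : Fin n | p v = j ∧ q v = i}.ncard)
    ∧ (((partGraph p ⊓ partGraph q).edgeSet.ncard : ℝ)
        ≤ ((partGraph p).edgeSet.ncard : ℝ)
          - ((Finset.univ.sup (fun j : Fin r =>
              secondLargest fun i : Fin r => {v : Fin n | p v = j ∧ q v = i}.ncard) : ℕ) : ℝ)
            * n / (2 * (r : ℝ) ^ 4)) :=
  stmt_14_general n r p q hbalp hbalq hne
end

section
/- Let H be an s-uniform hypergraph and suppose that for some β > 0 and M > 0, every vertex subset W ⊆ V(H) with |W| ≥ (1−β)·v(H) satisfies e(H[W]) ≥ M. Then there is a subhypergraph H' ⊆ H with at least M edges satisfying Δ_1(H') ≤ ⌈(s/β)·e(H')/v(H)⌉. -/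
theorem Multiset.exists_le_card_eq {α : Type*} {F : Multiset α} {m : ℕ}
    (h : m ≤ Multiset.card F) : ∃ F' ≤ F, Multiset.card F' = m := by
  refine ⟨(F.toList.take m : List α), ?_, by simpa using h⟩
  simpa using (Multiset.coe_le.2 (List.take_sublist m F.toList).subperm)

theorem Multiset.filter_cons_le_cons {α : Type*} (p : α → Prop) [DecidablePred p] (a : α)
    (s : Multiset α) : (a ::ₘ s).filter p ≤ a ::ₘ s.filter p := by
  by_cases ha : p a
  · rw [Multiset.filter_cons_of_pos _ ha]
  · rw [Multiset.filter_cons_of_neg _ ha]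
    exact Multiset.le_cons_self _ a

section Hypergraph

variable {V : Type*} [DecidableEq V]

theorem hdeg_mono {F F' : Multiset (Finset V)} (h : F' ≤ F) (T : Finset V) :
    hdeg F' T ≤ hdeg F T :=
  Multiset.card_le_card (Multiset.filter_le_filter _ h)

theorem hdeg_cons_singleton (F : Multiset (Finset V)) (A : Finset V) (v : V) :
    hdeg (A ::ₘ F) {v} = hdeg F {v} + if v ∈ A then 1 else 0 := by
  by_cases hv : v ∈ A <;> simp [hdeg, hv]

theorem hdeg_singleton_eq_zero {F : Multiset (Finset V)} (hF : ∀ A ∈ F, A.card = 0) (v : V) :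
    hdeg F {v} = 0 := by
  simp only [hdeg, Multiset.card_eq_zero, Multiset.filter_eq_nil, Finset.singleton_subset_iff]
  intro A hA hv
  simp [Finset.card_eq_zero.1 (hF A hA)] at hv

variable [Fintype V]

theorem sum_hdeg_singleton (F : Multiset (Finset V)) :
    ∑ v, hdeg F {v} = (F.map Finset.card).sum := by
  induction F using Multiset.induction with
  | empty => simp [hdeg]
  | cons A F ih =>
    simp [hdeg_cons_singleton, Finset.sum_add_distrib, ih, add_comm]

theorem sum_hdeg_singleton_of_uniform {s : ℕ} {F : Multiset (Finset V)}
    (hF : ∀ A ∈ F, A.card = s) : ∑ v, hdeg F {v} = s * Multiset.card F := by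
  rw [sum_hdeg_singleton, Multiset.map_congr rfl hF, Multiset.map_const', Multiset.sum_replicate,
    smul_eq_mul, mul_comm]

def lowDegVerts (F : Multiset (Finset V)) (D : ℕ) : Finset V :=
  Finset.univ.filter fun v => hdeg F {v} < D

theorem card_compl_lowDegVerts_mul_le {s : ℕ} {F : Multiset (Finset V)}
    (hF : ∀ A ∈ F, A.card = s) (D : ℕ) :
    (lowDegVerts F D)ᶜ.card * D ≤ s * Multiset.card F := by
  rw [← sum_hdeg_singleton_of_uniform hF, ← smul_eq_mul]
  calc (lowDegVerts F D)ᶜ.card • D ≤ ∑ v ∈ (lowDegVerts F D)ᶜ, hdeg F {v} :=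
        Finset.card_nsmul_le_sum _ _ _ fun v hv => by simpa [lowDegVerts] using hv
    _ ≤ ∑ v, hdeg F {v} := Finset.sum_le_univ_sum_of_nonneg fun _ => Nat.zero_le _

theorem exists_le_hdeg_le_filter_subset_lowDegVerts_le (H : Multiset (Finset V)) (D : ℕ) :
    ∃ F ≤ H, (∀ v, hdeg F {v} ≤ D) ∧ H.filter (· ⊆ lowDegVerts F D) ≤ F := by
  induction H using Multiset.induction with
  | empty => exact ⟨0, le_rfl, fun v => by simp [hdeg], by simp⟩
  | cons A H ih =>
    obtain ⟨F, hFH, hFdeg, hFmax⟩ := ih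
    by_cases hA : A ⊆ lowDegVerts F D
    · have hlow : lowDegVerts (A ::ₘ F) D ⊆ lowDegVerts F D := fun v hv => by
        simp only [lowDegVerts, Finset.mem_filter, Finset.mem_univ, true_and,
          hdeg_cons_singleton] at hv ⊢
        omega
      refine ⟨A ::ₘ F, Multiset.cons_le_cons A hFH, fun v => ?_, ?_⟩
      · rw [hdeg_cons_singleton]
        split_ifs with hv
        · simpa [lowDegVerts] using hA hv
        · exact hFdeg v
      · calc (A ::ₘ H).filter (· ⊆ lowDegVerts (A ::ₘ F) D)
            ≤ A ::ₘ H.filter (· ⊆ lowDegVerts (A ::ₘ F) D) := Multiset.filter_cons_le_cons _ _ _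
          _ ≤ A ::ₘ H.filter (· ⊆ lowDegVerts F D) :=
            Multiset.cons_le_cons A (Multiset.monotone_filter_right H fun _ hB => hB.trans hlow)
          _ ≤ A ::ₘ F := Multiset.cons_le_cons A hFmax
    · refine ⟨F, hFH.trans (Multiset.le_cons_self H A), hFdeg, ?_⟩
      rwa [Multiset.filter_cons_of_neg (p := (· ⊆ lowDegVerts F D)) _ hA]

end Hypergraph

theorem le_mul_of_mul_ceil_le {x y β : ℝ} {z N : ℕ} (hβ : 0 < β) (hxy : 0 < x * y)
    (hzN : z ≤ N) (h : (z : ℝ) * ⌈x / β * y / N⌉₊ ≤ x * y) : (z : ℝ) ≤ β * N := by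
  obtain rfl | hN := N.eq_zero_or_pos
  · simp [Nat.le_zero.1 hzN]
  have h' : (z : ℝ) * (x / β * y / N) ≤ x * y :=
    (mul_le_mul_of_nonneg_left (Nat.le_ceil _) (Nat.cast_nonneg z)).trans h
  rw [show x / β * y / N = x * y / (β * N) by ring, ← mul_div_assoc,
    div_le_iff₀ (by positivity)] at h'
  nlinarith

theorem stmt_16_general {V : Type*} [Fintype V] [DecidableEq V] (s : ℕ)
    (H : Multiset (Finset V)) (hunif : ∀ A ∈ H, A.card = s)
    (β M : ℝ) (hβ : 0 < β)
    (hdense : ∀ W : Finset V, (1 - β) * (Fintype.card V : ℝ) ≤ (W.card : ℝ) →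
      M ≤ ((H.filter fun A => A ⊆ W).card : ℝ)) :
    ∃ H' ≤ H, M ≤ (Multiset.card H' : ℝ) ∧
      ∀ v : V, hdeg H' {v}
        ≤ ⌈(s : ℝ) / β * (Multiset.card H' : ℝ) / (Fintype.card V : ℝ)⌉₊ := by
  obtain rfl | hs := s.eq_zero_or_pos
  · refine ⟨H, le_rfl, ?_, fun v => by simp [hdeg_singleton_eq_zero hunif v]⟩
    simpa using hdense Finset.univ
      (Finset.card_univ (α := V) ▸ mul_le_of_le_one_left (Nat.cast_nonneg _) (by linarith))
  set m := ⌈M⌉₊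
  set D := ⌈(s : ℝ) / β * m / Fintype.card V⌉₊
  obtain ⟨F, hFH, hFdeg, hFmax⟩ := exists_le_hdeg_le_filter_subset_lowDegVerts_le H D
  have hmF : m ≤ Multiset.card F := by
    by_contra! hFm
    have hcompl : ((lowDegVerts F D)ᶜ.card : ℝ) ≤ β * Fintype.card V := by
      have hsm : (0 : ℝ) < s * m := by
        have : 0 < m := by omega
        positivity
      refine le_mul_of_mul_ceil_le hβ hsm (Finset.card_le_univ _) ?_
      have := card_compl_lowDegVerts_mul_le (fun A hA => hunif A (Multiset.mem_of_le hFH hA)) D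
      exact_mod_cast this.trans (Nat.mul_le_mul_left s hFm.le)
    have hW := hdense (lowDegVerts F D) (by
      have : ((lowDegVerts F D).card : ℝ) + (lowDegVerts F D)ᶜ.card = Fintype.card V := by
        exact_mod_cast Finset.card_add_card_compl _
      linarith)
    exact hFm.not_ge (Nat.ceil_le.2 (hW.trans (by exact_mod_cast Multiset.card_le_card hFmax)))
  obtain ⟨H', hH'F, hH'card⟩ := Multiset.exists_le_card_eq hmF
  refine ⟨H', hH'F.trans hFH, hH'card ▸ Nat.le_ceil M, fun v => ?_⟩
  rw [hH'card]
  exact (hdeg_mono hH'F _).trans (hFdeg v)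

theorem stmt_16 {V : Type*} [Fintype V] [DecidableEq V] (s : ℕ)
    (H : Multiset (Finset V)) (hunif : ∀ A ∈ H, A.card = s)
    (β M : ℝ) (hβ : 0 < β) (hM : 0 < M)
    (hdense : ∀ W : Finset V, (1 - β) * (Fintype.card V : ℝ) ≤ (W.card : ℝ) →
      M ≤ ((H.filter fun A => A ⊆ W).card : ℝ)) :
    ∃ H' ≤ H, M ≤ (Multiset.card H' : ℝ) ∧
      ∀ v : V, hdeg H' {v}
        ≤ ⌈(s : ℝ) / β * (Multiset.card H' : ℝ) / (Fintype.card V : ℝ)⌉₊ :=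
  stmt_16_general s H hunif β M hβ hdense
end
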